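/- Let ε>0, K=(1/8−ε)N, and suppose Ψ : F₂[x] → ℝ satisfies: (1) Ψ(f)=0 whenever f is not of the form r−1 with r ∈ G_N prime; (2) Σ_{f∈G_N} Ψ(f)e(fθ) ≥ −2^{N−K} for all θ ∈ T; (3) Σ_{f∈G_N} Ψ(f) ≫ 2^N. Then any A ⊆ G_N such that A−A contains no r−1 with r prime satisfies |A| ≤ 2^N · 2^{N−K}/(2^{N−K} + Σ_{f∈G_N} Ψ(f)) ≪_ε 2^{(7/8+ε)N}. -/

import Mathlib

open Polynomial
open scoped Classical

noncomputable section

abbrev F2 := ZMod 2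
abbrev Kinf := LaurentSeries F2
def polyToK (f : F2[X]) : Kinf :=
  ∑ i ∈ f.support, HahnSeries.single (-(i : ℤ)) (f.coeff i)
def ordK (a : Kinf) : WithBot ℤ := if a = 0 then ⊥ else (↑(-a.order) : WithBot ℤ)
def eKr (a : Kinf) : ℝ := (-1 : ℝ) ^ ((a.coeff 1).val)
def eK (a : Kinf) : ℂ := ((eKr a : ℝ) : ℂ)
def InT (θ : Kinf) : Prop := ordK θ ≤ ((-1 : ℤ) : WithBot ℤ)
def GN (N : ℕ) : Finset F2[X] :=
  Set.Finite.toFinset (s := {f : F2[X] | f.degree < (N : ℕ)}) (by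
    have h : {f : F2[X] | f.degree < (N : ℕ)} = ↑(Polynomial.degreeLT F2 N) := by
      ext f
      simp [Polynomial.mem_degreeLT]
    rw [h]
    have : Finite (Polynomial.degreeLT F2 N) :=
      Finite.of_equiv _ (Polynomial.degreeLTEquiv F2 N).symm.toEquiv
    exact (Polynomial.degreeLT F2 N : Set F2[X]).toFinite)
def ratK (u s : F2[X]) : Kinf := polyToK u * (polyToK s)⁻¹

/-- τ(f): the number of divisors of `f`. -/
def tau (f : F2[X]) : ℕ := ((GN (f.natDegree + 1)).filter (fun g => g ∣ f)).card

/-- φ(f): the number of invertible residues modulo `f`. -/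
def phi (f : F2[X]) : ℕ := ((GN f.natDegree).filter (fun g => IsCoprime g f)).card

/-- ω(f): the number of (irreducible nonconstant, i.e. prime) divisors of `f`. -/
def omegaP (f : F2[X]) : ℕ :=
  ((GN (f.natDegree + 1)).filter (fun r => Irreducible r ∧ r ∣ f)).card

/-- The Möbius function on `F₂[x]`. -/
def mu (f : F2[X]) : ℤ := if Squarefree f then (-1) ^ (omegaP f) else 0

/-- The set of invertible residues modulo `s` (canonical representatives of
`(F₂[x]/(s))^×`, i.e. polynomials of degree `< deg s` coprime to `s`). -/
def residues (s : F2[X]) : Finset F2[X] := (GN s.natDegree).filter (fun t => IsCoprime t s)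

/-- `α(s) = μ(s)/φ(s)`. -/
def alphaA (s : F2[X]) : ℝ := (mu s : ℝ) / (phi s : ℝ)

/-- `α'(s) = ∏_{r | s prime} 3/(2^{deg r}+3)` for `s` squarefree, `0` otherwise. -/
def alphaB (s : F2[X]) : ℝ :=
  if Squarefree s then
    ∏ r ∈ (GN (s.natDegree + 1)).filter (fun r => Irreducible r ∧ r ∣ s),
      (3 : ℝ) / ((2 : ℝ) ^ r.natDegree + 3)
  else 0

/-- `Λ_M(f) = Σ_{s ∈ G_M} α(s) Σ_{t ∈ (F₂[x]/(s))^×} e(f t s⁻¹)`. -/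
def LambdaM (M : ℕ) (f : F2[X]) : ℝ :=
  ∑ s ∈ GN M, alphaA s * ∑ t ∈ residues s, eKr (polyToK f * ratK t s)

/-- `H_M(f) = Σ_{s ∈ G_M} α'(s) Σ_{t ∈ (F₂[x]/(s))^×} e(f t s⁻¹)`. -/
def HM (M : ℕ) (f : F2[X]) : ℝ :=
  ∑ s ∈ GN M, alphaB s * ∑ t ∈ residues s, eKr (polyToK f * ratK t s)

/-- `Λ'(f) = deg f` if `f` is prime, `0` otherwise. -/
def LambdaP (f : F2[X]) : ℝ := if Irreducible f then (f.natDegree : ℝ) else 0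

/-- `Ψ(f) = Λ'(f+1) H_Q(f) 1_{f ∈ G_N}`. -/
def Psi (N Q : ℕ) (f : F2[X]) : ℝ :=
  LambdaP (f + 1) * HM Q f * (if f ∈ GN N then 1 else 0)

/-- `Ψ'(f) = Λ_R(f+1) H_Q(f) 1_{f ∈ G_N}`. -/
def Psi' (N R Q : ℕ) (f : F2[X]) : ℝ :=
  LambdaM R (f + 1) * HM Q f * (if f ∈ GN N then 1 else 0)

/-- `Λ_r(f)` for a single prime `r`. -/
def Lambda_r (r f : F2[X]) : ℝ :=
  if r ∣ f then 0 else (2 : ℝ) ^ r.natDegree / ((2 : ℝ) ^ r.natDegree - 1)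

/-- `τ²_r(f)` for a single prime `r`. -/
def tauSq_r (r f : F2[X]) : ℝ :=
  if r ∣ f then 4 * (2 : ℝ) ^ r.natDegree / ((2 : ℝ) ^ r.natDegree + 3)
  else (2 : ℝ) ^ r.natDegree / ((2 : ℝ) ^ r.natDegree + 3)

/-- `˜Λ_M(f) = ∏_{r ∈ G_M prime} Λ_r(f)`. -/
def LambdaTilde (M : ℕ) (f : F2[X]) : ℝ :=
  ∏ r ∈ (GN M).filter (fun r => Irreducible r), Lambda_r r f

/-- `˜H_M(f) = ∏_{r ∈ G_M prime} τ²_r(f)`. -/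
def HTilde (M : ℕ) (f : F2[X]) : ℝ :=
  ∏ r ∈ (GN M).filter (fun r => Irreducible r), tauSq_r r f

/-- The element of `K∞` determined by a rational function (with `x ↦ t⁻¹`). -/
def ratToK (l : RatFunc F2) : Kinf := polyToK l.num * (polyToK l.denom)⁻¹

/-- `c : F₂(x)/F₂[x] → ℝ` (encoded on the canonical representatives
`λ = num/denom` in lowest terms with `deg num < deg denom`) is the system of Fourier
coefficients of `F : F₂[x] → ℝ`, i.e. `F(f) = Σ_λ c(λ) e(λ f)`. -/
def IsFourierCoeffs (F : F2[X] → ℝ) (c : RatFunc F2 → ℝ) : Prop :=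
  (Function.support c).Finite ∧
  (∀ l : RatFunc F2, c l ≠ 0 → (l.num).degree < (l.denom).degree) ∧
  ∀ f : F2[X], F f = ∑ᶠ l : RatFunc F2, c l * eKr (ratToK l * polyToK f)

/-- The canonical representative (mod `F₂[x]`) of a rational function. -/
def fracRat (l : RatFunc F2) : RatFunc F2 :=
  l - algebraMap F2[X] (RatFunc F2) (l.num / l.denom)

/-- `c(n, η)` from the statement of the exponential sum estimate for `Λ'`. -/
def cFun (n : ℕ) (η : Kinf) : ℝ :=
  if ordK η < ((-(n : ℤ) - 1 : ℤ) : WithBot ℤ) then 1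
  else if ordK η = ((-(n : ℤ) - 1 : ℤ) : WithBot ℤ) then -1
  else 0

/-- The class `C_B(X)` (with explicit implied constant `Cst`): functions whose Fourier
coefficients are supported on `λ` with squarefree denominator of degree `≤ X` and satisfy
`|c(λ)| ≤ Cst · τ(denom λ)^B / 2^{deg (denom λ)}`. -/
def InClassC (B X : ℕ) (Cst : ℝ) (F : F2[X] → ℝ) : Prop :=
  ∃ c : RatFunc F2 → ℝ, IsFourierCoeffs F c ∧
    (∀ l : RatFunc F2, c l ≠ 0 → Squarefree l.denom ∧ (l.denom).natDegree ≤ X) ∧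
    (∀ l : RatFunc F2, |c l| ≤ Cst * (tau l.denom : ℝ) ^ B / 2 ^ (l.denom).natDegree)

/-- The fractional part `‖θ‖` of `θ ∈ K∞`: keep exactly the coefficients of `x^{-n}`, `n ≥ 1`. -/
def fracK (θ : Kinf) : Kinf :=
  ⟨fun n => if 1 ≤ n then θ.coeff n else 0, by
    apply θ.isPWO_support'.mono
    intro n hn
    simp only [Function.mem_support, ne_eq] at hn ⊢
    intro h
    apply hn
    split_ifs
    · exact h
    · rfl⟩


/-! Identify `G_N` with `𝔽₂^N`: its characters are the Walsh characters
`f ↦ (-1)^{Σ_{i<N} f_i g_i}`, and these are realised as `e(f θ_g)` with `θ_g ∈ T`, so (2) says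
that the Walsh transform `Ψ̂` of `Ψ` is bounded below by `-2^{N-K}`. By (1) the function `Ψ`
vanishes on `A - A`, hence `Σ_g Ψ̂(g) |Â(g)|² = 2^N Σ_{a, a' ∈ A} Ψ(a - a') = 0`. Isolating
`g = 0`, where `Ψ̂(0) = Σ Ψ` and `Â(0) = |A|`, and bounding the other terms with Parseval
`Σ_g |Â(g)|² = 2^N |A|` gives `(Σ Ψ + 2^{N-K}) |A|² ≤ 2^{N-K} 2^N |A|`; then (3) gives the
second bound. -/

lemma neg_one_pow_val_add (u v : F2) :
    (-1 : ℝ) ^ (u + v).val = (-1) ^ u.val * (-1) ^ v.val := by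
  rw [ZMod.val_add, ← neg_one_pow_eq_pow_mod_two, pow_add]

lemma mem_GN {N : ℕ} {f : F2[X]} : f ∈ GN N ↔ f.degree < N := by
  simp [GN]

lemma zero_mem_GN (N : ℕ) : (0 : F2[X]) ∈ GN N := by
  simp [mem_GN]

lemma add_mem_GN {N : ℕ} {f g : F2[X]} (hf : f ∈ GN N) (hg : g ∈ GN N) : f + g ∈ GN N :=
  mem_GN.2 <| (degree_add_le f g).trans_lt (max_lt (mem_GN.1 hf) (mem_GN.1 hg))

lemma card_GN (N : ℕ) : (GN N).card = 2 ^ N := by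
  have hGN : (GN N : Set F2[X]) = degreeLT F2 N := by
    ext f; simp [mem_GN, mem_degreeLT]
  rw [← Set.ncard_coe_finset, hGN, ← Nat.card_coe_set_eq]
  exact (Nat.card_congr (degreeLTEquiv F2 N).toEquiv).trans (by simp)

lemma coeff_eq_zero_of_mem_GN {N : ℕ} {f : F2[X]} (hf : f ∈ GN N) {i : ℕ} (hi : N ≤ i) :
    f.coeff i = 0 :=
  coeff_eq_zero_of_degree_lt <| (mem_GN.1 hf).trans_le (by exact_mod_cast hi)

def walshPairing (N : ℕ) (f g : F2[X]) : F2 := ∑ i ∈ Finset.range N, f.coeff i * g.coeff i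

def walshChar (N : ℕ) (f g : F2[X]) : ℝ := (-1) ^ (walshPairing N f g).val

lemma walshChar_add_left (N : ℕ) (f f' g : F2[X]) :
    walshChar N (f + f') g = walshChar N f g * walshChar N f' g := by
  simp only [walshChar, walshPairing, coeff_add, add_mul, Finset.sum_add_distrib,
    neg_one_pow_val_add]

lemma walshChar_comm (N : ℕ) (f g : F2[X]) : walshChar N f g = walshChar N g f := by
  simp only [walshChar, walshPairing, mul_comm]

lemma walshChar_add_right (N : ℕ) (f g g' : F2[X]) :
    walshChar N f (g + g') = walshChar N f g * walshChar N f g' := by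
  simp only [walshChar_comm N f, walshChar_add_left]

@[simp] lemma walshChar_zero_left (N : ℕ) (g : F2[X]) : walshChar N 0 g = 1 := by
  simp [walshChar, walshPairing]

@[simp] lemma walshChar_zero_right (N : ℕ) (f : F2[X]) : walshChar N f 0 = 1 := by
  simp [walshChar, walshPairing]

lemma walshChar_X_pow_natDegree {N : ℕ} {f : F2[X]} (hf : f ≠ 0) (hN : f.natDegree < N) :
    walshChar N f (X ^ f.natDegree) = -1 := by
  have hF2 : ∀ u : F2, u ≠ 0 → u = 1 := by decide
  have hlead : f.leadingCoeff = 1 := hF2 _ (leadingCoeff_ne_zero.2 hf)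
  have hpair : walshPairing N f (X ^ f.natDegree) = 1 := by
    rw [walshPairing, Finset.sum_eq_single_of_mem _ (Finset.mem_range.2 hN)]
    · simpa [coeff_X_pow] using hlead
    · intro i _ hi
      simp [coeff_X_pow, hi]
  simp [walshChar, hpair, ZMod.val_one]

lemma sum_walshChar {N : ℕ} {f : F2[X]} (hf : f ∈ GN N) :
    ∑ g ∈ GN N, walshChar N f g = if f = 0 then 2 ^ N else 0 := by
  split_ifs with h0
  · simp [h0, card_GN]
  have hdeg : f.natDegree < N := (natDegree_lt_iff_degree_lt h0).2 (mem_GN.1 hf)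
  have hX : X ^ f.natDegree ∈ GN N := mem_GN.2 (by simpa using hdeg)
  refine Finset.sum_involution (fun g _ => g + X ^ f.natDegree) (fun g _ => ?_)
    (fun g _ _ => ?_) (fun g hg => add_mem_GN hg hX) (fun g _ => CharTwo.add_cancel_right _ _)
  · rw [walshChar_add_right, walshChar_X_pow_natDegree h0 hdeg]
    ring
  · simp [X_ne_zero]

/-- The point `Σ_j g_j x^{-(j+1)}` of `T` (in `Kinf` the variable is `1/x`), at which
`e(f ·)` is the Walsh character of `f`. -/
def dualPoint (g : F2[X]) : Kinf :=
  ∑ j ∈ g.support, HahnSeries.single ((j : ℤ) + 1) (g.coeff j)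

lemma InT_dualPoint (g : F2[X]) : InT (dualPoint g) := by
  unfold InT ordK
  split_ifs with h
  · exact bot_le
  have hcoeff : ∀ n : ℤ, n < 1 → (dualPoint g).coeff n = 0 := fun n hn => by
    rw [dualPoint, HahnSeries.coeff_sum]
    exact Finset.sum_eq_zero fun j _ => HahnSeries.coeff_single_of_ne (by omega)
  have horder : 1 ≤ (dualPoint g).order := by
    by_contra! hlt
    exact h (HahnSeries.coeff_order_eq_zero.1 (hcoeff _ hlt))
  exact WithBot.coe_le_coe.2 (by omega)

lemma eKr_polyToK_mul_dualPoint {N : ℕ} {f : F2[X]} (hf : f ∈ GN N) (g : F2[X]) :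
    eKr (polyToK f * dualPoint g) = walshChar N f g := by
  have hsupp : f.support ⊆ Finset.range N := fun i hi => Finset.mem_range.2 <|
    lt_of_not_ge fun hN => mem_support_iff.1 hi (coeff_eq_zero_of_mem_GN hf hN)
  have hcoeff : (polyToK f * dualPoint g).coeff 1 = walshPairing N f g := by
    have hexp : ∀ i j : ℕ, ((1 : ℤ) = -(i : ℤ) + ((j : ℤ) + 1)) ↔ j = i := by omega
    rw [polyToK, dualPoint, Finset.sum_mul_sum]
    simp_rw [HahnSeries.single_mul_single, HahnSeries.coeff_sum, HahnSeries.coeff_single, hexp,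
      Finset.sum_ite_eq', walshPairing]
    rw [Finset.sum_ite_mem]
    refine Finset.sum_subset (Finset.inter_subset_left.trans hsupp) fun i _ hi => ?_
    rw [Finset.mem_inter, mem_support_iff, mem_support_iff, not_and_or, not_not, not_not] at hi
    rcases hi with h | h <;> simp [h]
  rw [eKr, walshChar, hcoeff]

def walshTransform (N : ℕ) (Ψ : F2[X] → ℝ) (g : F2[X]) : ℝ :=
  ∑ f ∈ GN N, Ψ f * walshChar N f g

lemma sum_walshTransform_mul_walshChar {N : ℕ} (Ψ : F2[X] → ℝ) {h : F2[X]} (hh : h ∈ GN N) :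
    ∑ g ∈ GN N, walshTransform N Ψ g * walshChar N h g = 2 ^ N * Ψ h := by
  simp_rw [walshTransform, Finset.sum_mul, mul_assoc, ← walshChar_add_left]
  rw [Finset.sum_comm]
  simp_rw [← Finset.mul_sum]
  calc ∑ f ∈ GN N, Ψ f * ∑ g ∈ GN N, walshChar N (f + h) g
      = ∑ f ∈ GN N, if f = h then 2 ^ N * Ψ h else 0 :=
        Finset.sum_congr rfl fun f hf => by
          simp only [sum_walshChar (add_mem_GN hf hh), CharTwo.add_eq_zero]
          split_ifs with hfh <;> simp [hfh, mul_comm]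
    _ = 2 ^ N * Ψ h := by rw [Finset.sum_ite_eq', if_pos hh]

lemma sq_sum_walshChar (N : ℕ) (A : Finset F2[X]) (g : F2[X]) :
    (∑ a ∈ A, walshChar N a g) ^ 2 = ∑ a₁ ∈ A, ∑ a₂ ∈ A, walshChar N (a₁ + a₂) g := by
  simp_rw [sq, Finset.sum_mul_sum, walshChar_add_left]

lemma sum_walshTransform_mul_sq {N : ℕ} {A : Finset F2[X]} (hA : A ⊆ GN N) (Ψ : F2[X] → ℝ) :
    ∑ g ∈ GN N, walshTransform N Ψ g * (∑ a ∈ A, walshChar N a g) ^ 2 =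
      2 ^ N * ∑ a₁ ∈ A, ∑ a₂ ∈ A, Ψ (a₁ + a₂) := by
  simp_rw [sq_sum_walshChar, Finset.mul_sum]
  rw [Finset.sum_comm]
  refine Finset.sum_congr rfl fun a₁ ha₁ => ?_
  rw [Finset.sum_comm]
  exact Finset.sum_congr rfl fun a₂ ha₂ =>
    sum_walshTransform_mul_walshChar Ψ (add_mem_GN (hA ha₁) (hA ha₂))

lemma sum_sq_sum_walshChar {N : ℕ} {A : Finset F2[X]} (hA : A ⊆ GN N) :
    ∑ g ∈ GN N, (∑ a ∈ A, walshChar N a g) ^ 2 = 2 ^ N * A.card := by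
  have h := sum_walshTransform_mul_sq hA (fun f => if f = 0 then 1 else 0)
  simp_rw [CharTwo.add_eq_zero] at h
  simpa [walshTransform, zero_mem_GN] using h

lemma mul_sq_le_of_sum_mul_sq_eq_zero {ι : Type*} {s : Finset ι} {i₀ : ι} (hi₀ : i₀ ∈ s)
    {W S : ι → ℝ} {T : ℝ} (hW : ∀ i ∈ s, -T ≤ W i) (hsum : ∑ i ∈ s, W i * S i ^ 2 = 0) :
    (W i₀ + T) * S i₀ ^ 2 ≤ T * ∑ i ∈ s, S i ^ 2 :=
  calc (W i₀ + T) * S i₀ ^ 2 ≤ ∑ i ∈ s, (W i + T) * S i ^ 2 :=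
        Finset.single_le_sum (f := fun i => (W i + T) * S i ^ 2)
          (fun i hi => mul_nonneg (by linarith [hW i hi]) (sq_nonneg _)) hi₀
    _ = T * ∑ i ∈ s, S i ^ 2 := by
        simp only [add_mul, Finset.sum_add_distrib, hsum, ← Finset.mul_sum, zero_add]

theorem card_le_of_walshTransform_ge {N : ℕ} {Ψ : F2[X] → ℝ} {A : Finset F2[X]} {T : ℝ}
    (hA : A ⊆ GN N) (hT : 0 ≤ T) (hvanish : ∀ a₁ ∈ A, ∀ a₂ ∈ A, Ψ (a₁ + a₂) = 0)
    (hW : ∀ g ∈ GN N, -T ≤ walshTransform N Ψ g) (hpos : 0 < T + ∑ f ∈ GN N, Ψ f) :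
    (A.card : ℝ) ≤ 2 ^ N * T / (T + ∑ f ∈ GN N, Ψ f) := by
  have h := mul_sq_le_of_sum_mul_sq_eq_zero (zero_mem_GN N) hW (by
    rw [sum_walshTransform_mul_sq hA, Finset.sum_eq_zero fun a₁ ha₁ =>
      Finset.sum_eq_zero (hvanish a₁ ha₁), mul_zero])
  rw [sum_sq_sum_walshChar hA] at h
  simp only [walshTransform, walshChar_zero_right, mul_one, Finset.sum_const, nsmul_eq_mul] at h
  rw [le_div_iff₀ hpos]
  rcases (Nat.cast_nonneg A.card : (0 : ℝ) ≤ A.card).eq_or_lt with h0 | h0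
  · rw [← h0, zero_mul]; positivity
  · nlinarith

/-- If `Ψ` satisfies properties (1)–(3) (with `K = (1/8−ε)N` and lower-bound constant `c`
in (3)), then any `A ⊆ G_N` whose difference set avoids all `r − 1`, `r` prime, satisfies
`|A| ≤ 2^N · 2^{N−K}/(2^{N−K} + Σ_{f∈G_N} Ψ(f))`, and this is `≪_ε 2^{(7/8+ε)N}`. -/
theorem statement_2 :
    ∀ ε : ℝ, 0 < ε → ∀ c : ℝ, 0 < c → ∃ C : ℝ, 0 < C ∧
      ∀ N : ℕ, ∀ Ψ : F2[X] → ℝ,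
        (∀ f : F2[X], (¬ ∃ r : F2[X], Irreducible r ∧ r ∈ GN N ∧ f = r - 1) → Ψ f = 0) →
        (∀ θ : Kinf, InT θ →
          -((2 : ℝ) ^ ((N : ℝ) - (1 / 8 - ε) * (N : ℝ))) ≤
            ∑ f ∈ GN N, Ψ f * eKr (polyToK f * θ)) →
        (c * 2 ^ N ≤ ∑ f ∈ GN N, Ψ f) →
        ∀ A : Finset F2[X], A ⊆ GN N →
          (∀ a₁ ∈ A, ∀ a₂ ∈ A, ∀ r : F2[X], Irreducible r → a₁ - a₂ ≠ r - 1) →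
          (A.card : ℝ) ≤ 2 ^ N * (2 : ℝ) ^ ((N : ℝ) - (1 / 8 - ε) * (N : ℝ)) /
              ((2 : ℝ) ^ ((N : ℝ) - (1 / 8 - ε) * (N : ℝ)) + ∑ f ∈ GN N, Ψ f) ∧
            (A.card : ℝ) ≤ C * (2 : ℝ) ^ ((7 / 8 + ε) * (N : ℝ)) := by
  intro ε _ c hc
  refine ⟨1 / c, by positivity, fun N Ψ hsupp hneg hmass A hA hdiff => ?_⟩
  set T : ℝ := 2 ^ ((N : ℝ) - (1 / 8 - ε) * N) with hT
  have hTpos : 0 < T := by positivity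
  have hmass_pos : 0 < c * 2 ^ N := by positivity
  have hvanish : ∀ a₁ ∈ A, ∀ a₂ ∈ A, Ψ (a₁ + a₂) = 0 := fun a₁ ha₁ a₂ ha₂ =>
    hsupp _ fun ⟨r, hr, _, hdiff_eq⟩ =>
      hdiff a₁ ha₁ a₂ ha₂ r hr (by rw [CharTwo.sub_eq_add, hdiff_eq])
  have hW : ∀ g ∈ GN N, -T ≤ walshTransform N Ψ g := fun g _ => by
    convert hneg _ (InT_dualPoint g) using 1
    exact Finset.sum_congr rfl fun f hf => by rw [eKr_polyToK_mul_dualPoint hf]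
  have hcard := card_le_of_walshTransform_ge hA hTpos.le hvanish hW (by linarith)
  refine ⟨hcard, hcard.trans ?_⟩
  have hexp : (2 : ℝ) ^ ((7 / 8 + ε) * N) = T := by rw [hT]; ring_nf
  calc 2 ^ N * T / (T + ∑ f ∈ GN N, Ψ f) ≤ 2 ^ N * T / (c * 2 ^ N) :=
        div_le_div_of_nonneg_left (by positivity) hmass_pos (by linarith)
    _ = 1 / c * 2 ^ ((7 / 8 + ε) * N) := by rw [hexp]; field_simp
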